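/- arXiv:1602.04387 — 4 statements merged into one kernel-verified Lean document; each statement's English description precedes it below -/
import Mathlib

section
/- Let X2, X3, X4 be i.i.d. copies of a real random variable X and let a be the sign function a(z1,z2,z3,z4) = I(z1,z3<z2,z4) + I(z1,z3>z2,z4) - I(z1,z2<z3,z4) - I(z1,z2>z3,z4). Then for every real x1, E[a(x1, X2, X3, X4)] = 0. -/
open Classical MeasureTheory

/-- The Bergsma–Dassios sign function `a`. -/
noncomputable def signA (z1 z2 z3 z4 : ℝ) : ℝ :=
  (if max z1 z3 < min z2 z4 then (1:ℝ) else 0)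
    + (if max z2 z4 < min z1 z3 then (1:ℝ) else 0)
    - (if max z1 z2 < min z3 z4 then (1:ℝ) else 0)
    - (if max z3 z4 < min z1 z2 then (1:ℝ) else 0)

lemma signA_swap23 (x1 x2 x3 x4 : ℝ) : signA x1 x3 x2 x4 = - signA x1 x2 x3 x4 := by
  simp only [signA]; ring

lemma signA_norm_le (x1 x2 x3 x4 : ℝ) : ‖signA x1 x2 x3 x4‖ ≤ 2 := by
  simp only [signA, Real.norm_eq_abs]
  split_ifs <;> norm_num

lemma signA_meas (x1 : ℝ) :
    Measurable fun p : (ℝ × ℝ) × ℝ => signA x1 p.1.1 p.1.2 p.2 := by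
  have h : ∀ f g : (ℝ × ℝ) × ℝ → ℝ, Measurable f → Measurable g →
      Measurable (fun p => if f p < g p then (1:ℝ) else 0) := fun f g hf hg =>
    Measurable.ite (measurableSet_lt hf hg) measurable_const measurable_const
  have m1 : Measurable (fun p : (ℝ × ℝ) × ℝ => p.1.1) := measurable_fst.comp measurable_fst
  have m2 : Measurable (fun p : (ℝ × ℝ) × ℝ => p.1.2) := measurable_snd.comp measurable_fst
  have m3 : Measurable (fun p : (ℝ × ℝ) × ℝ => p.2) := measurable_snd
  unfold signA
  exact (((h _ _ (measurable_const.max m2) (m1.min m3)).add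
      (h _ _ (m1.max m3) (measurable_const.min m2))).sub
      (h _ _ (measurable_const.max m1) (m2.min m3))).sub
      (h _ _ (m2.max m3) (measurable_const.min m1))

theorem expectation_signA_one_fixed_eq_zero
    (μ : Measure ℝ) [IsProbabilityMeasure μ] (x1 : ℝ) :
    ∫ x2, ∫ x3, ∫ x4, signA x1 x2 x3 x4 ∂μ ∂μ ∂μ = 0 := by
  set F : ℝ → ℝ → ℝ := fun x2 x3 => ∫ x4, signA x1 x2 x3 x4 ∂μ with hF
  have hmeas := signA_meas x1
  have hFsm : StronglyMeasurable (fun p : ℝ × ℝ => F p.1 p.2) := by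
    have h2 : StronglyMeasurable
        (Function.uncurry fun (q : ℝ × ℝ) (x4 : ℝ) => signA x1 q.1 q.2 x4) :=
      hmeas.stronglyMeasurable
    exact h2.integral_prod_right
  have hFbd : ∀ x2 x3, ‖F x2 x3‖ ≤ 2 := by
    intro x2 x3
    calc ‖F x2 x3‖ ≤ 2 * (μ Set.univ).toReal :=
          norm_integral_le_of_norm_le_const (Filter.Eventually.of_forall fun x4 =>
            signA_norm_le x1 x2 x3 x4)
      _ = 2 := by simp
  have hint : Integrable (Function.uncurry F) (μ.prod μ) := by
    refine ⟨hFsm.aestronglyMeasurable, ?_⟩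
    apply HasFiniteIntegral.of_bounded (C := 2)
    exact Filter.Eventually.of_forall fun p => hFbd p.1 p.2
  have hswap : ∫ x2, ∫ x3, F x2 x3 ∂μ ∂μ = ∫ x3, ∫ x2, F x2 x3 ∂μ ∂μ :=
    integral_integral_swap hint
  have hneg : ∫ x3, ∫ x2, F x2 x3 ∂μ ∂μ = - ∫ x2, ∫ x3, F x2 x3 ∂μ ∂μ := by
    rw [← integral_neg]
    congr 1
    funext x3
    rw [← integral_neg]
    congr 1
    funext x2
    rw [hF]
    simp only
    rw [← integral_neg]
    congr 1
    funext x4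
    exact (signA_swap23 x1 x3 x2 x4).symm ▸ (signA_swap23 x1 x3 x2 x4)
  have : ∫ x2, ∫ x3, F x2 x3 ∂μ ∂μ = 0 := by linarith [hswap.trans hneg]
  simpa [hF] using this
end

section
/- Let (X1,Y1),...,(X4,Y4) be i.i.d. copies of (X,Y) with X independent of Y, and let h be the symmetrized kernel h((x1,y1),...,(x4,y4)) = (1/4!) Σ_{π ∈ S4} a(x_{π(1)},...,x_{π(4)}) a(y_{π(1)},...,y_{π(4)}). Then h1(x1,y1) := E[h((x1,y1),(X2,Y2),(X3,Y3),(X4,Y4))] = 0 for all (x1,y1). Consequently σ1² = Var[h1(X1,Y1)] = 0; i.e., the U-statistic t* is degenerate under independence. -/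
open Classical MeasureTheory

/-- The symmetrized Bergsma–Dassios kernel `h`. -/
noncomputable def hKer (p : Fin 4 → ℝ × ℝ) : ℝ :=
  (1 / 24) * ∑ π : Equiv.Perm (Fin 4),
    signA (p (π 0)).1 (p (π 1)).1 (p (π 2)).1 (p (π 3)).1 *
      signA (p (π 0)).2 (p (π 1)).2 (p (π 2)).2 (p (π 3)).2

/-!
Expanding the symmetrised kernel, `h₁(x₁, y₁)` is `1/24` times a sum over `π ∈ S₄` of integrals
against `(μ ⊗ ν)³` of products `a(x-entries permuted by π) · a(y-entries permuted by π)`.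
By independence each such integral factorises into a `μ³`-integral of the `x`-factor times a
`ν³`-integral of the `y`-factor, and the `x`-factor integrates to zero: `a` changes sign when its
two middle or its two outer arguments are exchanged, one of these two pairs of slots avoids the
fixed entry `x₁`, and exchanging two i.i.d. coordinates does not change the integral.
So `h₁ ≡ 0`, and a constant has variance zero.
-/

namespace MeasurableEquiv

variable {α : Type*} [MeasurableSpace α]

/-- `(x, y, z) ↦ (y, z, x)`; with `tripleSwapTail` it generates all permutations of coordinates. -/
def tripleRotate : α × α × α ≃ᵐ α × α × α :=
  prodComm.trans prodAssoc

def tripleSwapTail : α × α × α ≃ᵐ α × α × α :=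
  (refl α).prodCongr prodComm

end MeasurableEquiv

namespace MeasureTheory

variable {α : Type*} [MeasurableSpace α] {ρ : Measure α}

theorem MeasurePreserving.integral_eq_zero_of_comp_eq_neg {e : α ≃ᵐ α}
    (he : MeasurePreserving e ρ ρ) {F : α → ℝ} (hF : ∀ x, F (e x) = -F x) :
    ∫ x, F x ∂ρ = 0 := by
  have h := he.integral_comp' F
  simp only [hF, integral_neg] at h
  linarith

variable [SFinite ρ]

theorem measurePreserving_tripleRotate :
    MeasurePreserving (MeasurableEquiv.tripleRotate (α := α))
      (ρ.prod (ρ.prod ρ)) (ρ.prod (ρ.prod ρ)) :=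
  (measurePreserving_prodAssoc ρ ρ ρ).comp Measure.measurePreserving_swap

theorem measurePreserving_tripleSwapTail :
    MeasurePreserving (MeasurableEquiv.tripleSwapTail (α := α))
      (ρ.prod (ρ.prod ρ)) (ρ.prod (ρ.prod ρ)) :=
  (MeasurePreserving.id ρ).prod Measure.measurePreserving_swap

theorem integral_prod_vecCons_eq_zero_of_comp_swap {G : (Fin 4 → α) → ℝ} (x : α) {i j : Fin 4}
    (hi : i ≠ 0) (hj : j ≠ 0) (hij : i ≠ j) (hG : ∀ v, G (v ∘ Equiv.swap i j) = -G v) :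
    ∫ p, G ![x, p.1, p.2.1, p.2.2] ∂(ρ.prod (ρ.prod ρ)) = 0 := by
  obtain ⟨e, he, hswap⟩ : ∃ e : α × α × α ≃ᵐ α × α × α,
      MeasurePreserving e (ρ.prod (ρ.prod ρ)) (ρ.prod (ρ.prod ρ)) ∧
      ∀ p, ![x, (e p).1, (e p).2.1, (e p).2.2] = ![x, p.1, p.2.1, p.2.2] ∘ Equiv.swap i j := by
    have swap₁₂ := measurePreserving_tripleRotate.trans (measurePreserving_tripleSwapTail (ρ := ρ))
    have swap₁₃ := measurePreserving_tripleSwapTail.trans (measurePreserving_tripleRotate (ρ := ρ))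
    fin_cases i <;> fin_cases j <;> try contradiction
    · exact ⟨_, swap₁₂, fun p => by ext k; fin_cases k <;> rfl⟩
    · exact ⟨_, swap₁₃, fun p => by ext k; fin_cases k <;> rfl⟩
    · exact ⟨_, swap₁₂, fun p => by ext k; fin_cases k <;> rfl⟩
    · exact ⟨_, measurePreserving_tripleSwapTail, fun p => by ext k; fin_cases k <;> rfl⟩
    · exact ⟨_, swap₁₃, fun p => by ext k; fin_cases k <;> rfl⟩
    · exact ⟨_, measurePreserving_tripleSwapTail, fun p => by ext k; fin_cases k <;> rfl⟩
  exact he.integral_eq_zero_of_comp_eq_neg fun p => by simp only [hswap, hG]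

theorem integral_integral_integral_eq_integral_prod {F : α → α → α → ℝ}
    (hF : Integrable (fun p : α × α × α => F p.1 p.2.1 p.2.2) (ρ.prod (ρ.prod ρ))) :
    ∫ x, ∫ y, ∫ z, F x y z ∂ρ ∂ρ ∂ρ = ∫ p, F p.1 p.2.1 p.2.2 ∂(ρ.prod (ρ.prod ρ)) := by
  rw [integral_prod _ hF]
  refine integral_congr_ae ?_
  filter_upwards [hF.prod_right_ae] with x hx
  exact (integral_prod _ hx).symm

theorem integral_integral_integral_finsetSum {ι : Type*} (s : Finset ι) {F : ι → α → α → α → ℝ}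
    (hF : ∀ i ∈ s, Integrable (fun p : α × α × α => F i p.1 p.2.1 p.2.2) (ρ.prod (ρ.prod ρ))) :
    ∫ x, ∫ y, ∫ z, ∑ i ∈ s, F i x y z ∂ρ ∂ρ ∂ρ =
      ∑ i ∈ s, ∫ x, ∫ y, ∫ z, F i x y z ∂ρ ∂ρ ∂ρ := by
  rw [integral_integral_integral_eq_integral_prod (integrable_finsetSum s hF),
    integral_finsetSum s hF]
  exact Finset.sum_congr rfl fun i hi =>
    (integral_integral_integral_eq_integral_prod (hF i hi)).symm

theorem integral_integral_integral_prod_mul {β γ : Type*} [MeasurableSpace β] [MeasurableSpace γ]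
    {μ : Measure β} {ν : Measure γ} [SFinite μ] [SFinite ν] (f : β → β → β → ℝ)
    (g : γ → γ → γ → ℝ) :
    ∫ z₁, ∫ z₂, ∫ z₃, f z₁.1 z₂.1 z₃.1 * g z₁.2 z₂.2 z₃.2 ∂(μ.prod ν) ∂(μ.prod ν) ∂(μ.prod ν) =
      (∫ x₁, ∫ x₂, ∫ x₃, f x₁ x₂ x₃ ∂μ ∂μ ∂μ) * ∫ y₁, ∫ y₂, ∫ y₃, g y₁ y₂ y₃ ∂ν ∂ν ∂ν := by
  have inner (z₁ z₂ : β × γ) := integral_prod_mul (μ := μ) (ν := ν)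
    (fun x₃ => f z₁.1 z₂.1 x₃) (fun y₃ => g z₁.2 z₂.2 y₃)
  have middle (z₁ : β × γ) := integral_prod_mul (μ := μ) (ν := ν)
    (fun x₂ => ∫ x₃, f z₁.1 x₂ x₃ ∂μ) (fun y₂ => ∫ y₃, g z₁.2 y₂ y₃ ∂ν)
  simp only [inner, middle]
  exact integral_prod_mul (fun x₁ => ∫ x₂, ∫ x₃, f x₁ x₂ x₃ ∂μ ∂μ)
    (fun y₁ => ∫ y₂, ∫ y₃, g y₁ y₂ y₃ ∂ν ∂ν)

end MeasureTheory

theorem abs_signA_le (a b c d : ℝ) : |signA a b c d| ≤ 2 := by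
  unfold signA; split_ifs <;> norm_num

theorem signA_swap_middle (a b c d : ℝ) : signA a c b d = -signA a b c d := by
  unfold signA; ring

theorem signA_swap_outer (a b c d : ℝ) : signA d b c a = -signA a b c d := by
  unfold signA; simp only [max_comm, min_comm]; ring

@[fun_prop]
theorem Measurable.signA {α : Type*} [MeasurableSpace α] {f₁ f₂ f₃ f₄ : α → ℝ}
    (h₁ : Measurable f₁) (h₂ : Measurable f₂) (h₃ : Measurable f₃) (h₄ : Measurable f₄) :
    Measurable fun a => signA (f₁ a) (f₂ a) (f₃ a) (f₄ a) := by
  unfold _root_.signA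
  apply_rules [Measurable.add, Measurable.sub, Measurable.neg, Measurable.ite, measurableSet_lt,
    measurable_const, Measurable.max, Measurable.min]

noncomputable def signAPerm (π : Equiv.Perm (Fin 4)) (v : Fin 4 → ℝ) : ℝ :=
  signA (v (π 0)) (v (π 1)) (v (π 2)) (v (π 3))

theorem abs_signAPerm_le (π : Equiv.Perm (Fin 4)) (v : Fin 4 → ℝ) : |signAPerm π v| ≤ 2 :=
  abs_signA_le _ _ _ _

@[fun_prop]
theorem Measurable.signAPerm {α : Type*} [MeasurableSpace α] (π : Equiv.Perm (Fin 4))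
    {f : α → Fin 4 → ℝ} (hf : Measurable f) : Measurable fun a => _root_.signAPerm π (f a) := by
  unfold _root_.signAPerm; fun_prop

theorem hKer_vecCons (a b c d : ℝ × ℝ) :
    hKer ![a, b, c, d] = 1 / 24 * ∑ π : Equiv.Perm (Fin 4),
      signAPerm π ![a.1, b.1, c.1, d.1] * signAPerm π ![a.2, b.2, c.2, d.2] := by
  have h (p : Fin 4 → ℝ × ℝ) : hKer p = 1 / 24 * ∑ π : Equiv.Perm (Fin 4),
      signAPerm π (Prod.fst ∘ p) * signAPerm π (Prod.snd ∘ p) := rfl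
  rw [h, ← FinVec.map_eq, ← FinVec.map_eq]
  rfl

theorem signAPerm_comp_swap_middle (π : Equiv.Perm (Fin 4)) (v : Fin 4 → ℝ) :
    signAPerm π (v ∘ Equiv.swap (π 1) (π 2)) = -signAPerm π v := by
  rw [signAPerm, signAPerm, ← signA_swap_middle]
  simp [Equiv.swap_apply_of_ne_of_ne, π.injective.ne_iff]

theorem signAPerm_comp_swap_outer (π : Equiv.Perm (Fin 4)) (v : Fin 4 → ℝ) :
    signAPerm π (v ∘ Equiv.swap (π 0) (π 3)) = -signAPerm π v := by
  rw [signAPerm, signAPerm, ← signA_swap_outer]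
  simp [Equiv.swap_apply_of_ne_of_ne, π.injective.ne_iff]

theorem exists_swap_signAPerm_comp_eq_neg (π : Equiv.Perm (Fin 4)) :
    ∃ i j : Fin 4, i ≠ 0 ∧ j ≠ 0 ∧ i ≠ j ∧
      ∀ v, signAPerm π (v ∘ Equiv.swap i j) = -signAPerm π v := by
  by_cases h : π 0 = 0 ∨ π 3 = 0
  · refine ⟨π 1, π 2, ?_, ?_, π.injective.ne (by decide), signAPerm_comp_swap_middle π⟩ <;>
      rcases h with h | h <;> rw [← h] <;> exact π.injective.ne (by decide)
  · rw [not_or] at h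
    exact ⟨π 0, π 3, h.1, h.2, π.injective.ne (by decide), signAPerm_comp_swap_outer π⟩

theorem integral_integral_integral_signAPerm_eq_zero (ρ : Measure ℝ) [IsFiniteMeasure ρ]
    (π : Equiv.Perm (Fin 4)) (x : ℝ) :
    ∫ b, ∫ c, ∫ d, signAPerm π ![x, b, c, d] ∂ρ ∂ρ ∂ρ = 0 := by
  have hint : Integrable (fun p : ℝ × ℝ × ℝ => signAPerm π ![x, p.1, p.2.1, p.2.2])
      (ρ.prod (ρ.prod ρ)) :=
    .of_bound (Measurable.aestronglyMeasurable (by fun_prop)) 2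
      (ae_of_all _ fun _ => abs_signAPerm_le _ _)
  obtain ⟨i, j, hi, hj, hij, hswap⟩ := exists_swap_signAPerm_comp_eq_neg π
  rw [integral_integral_integral_eq_integral_prod hint]
  exact integral_prod_vecCons_eq_zero_of_comp_swap x hi hj hij hswap

theorem integral_integral_integral_hKer_eq_zero (μ ν : Measure ℝ) [IsFiniteMeasure μ]
    [IsFiniteMeasure ν] (w : ℝ × ℝ) :
    ∫ z₂, ∫ z₃, ∫ z₄, hKer ![w, z₂, z₃, z₄] ∂(μ.prod ν) ∂(μ.prod ν) ∂(μ.prod ν) = 0 := by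
  have hint (π : Equiv.Perm (Fin 4)) : Integrable (fun p : (ℝ × ℝ) × (ℝ × ℝ) × (ℝ × ℝ) =>
      signAPerm π ![w.1, p.1.1, p.2.1.1, p.2.2.1] * signAPerm π ![w.2, p.1.2, p.2.1.2, p.2.2.2])
      ((μ.prod ν).prod ((μ.prod ν).prod (μ.prod ν))) := by
    refine .of_bound (Measurable.aestronglyMeasurable (by fun_prop)) 4 (ae_of_all _ fun _ => ?_)
    rw [norm_mul]
    exact (mul_le_mul (abs_signAPerm_le _ _) (abs_signAPerm_le _ _) (abs_nonneg _)
      zero_le_two).trans_eq (by norm_num)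
  simp only [hKer_vecCons, integral_const_mul]
  rw [integral_integral_integral_finsetSum _ fun π _ => hint π]
  refine mul_eq_zero_of_right _ (Finset.sum_eq_zero fun π _ => ?_)
  rw [integral_integral_integral_prod_mul (fun b c d => signAPerm π ![w.1, b, c, d])
    (fun b c d => signAPerm π ![w.2, b, c, d]), integral_integral_integral_signAPerm_eq_zero,
    zero_mul]

/-- Under independence (joint law `μ.prod ν`), the first projection `h₁` of the
Bergsma–Dassios kernel vanishes identically; hence `σ₁² = Var[h₁(X₁,Y₁)] = 0`. -/
theorem h1_eq_zero_of_indep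
    (μ ν : Measure ℝ) [IsProbabilityMeasure μ] [IsProbabilityMeasure ν] :
    (∀ x1 y1 : ℝ,
      (∫ z2, ∫ z3, ∫ z4, hKer ![(x1, y1), z2, z3, z4]
          ∂(μ.prod ν) ∂(μ.prod ν) ∂(μ.prod ν)) = 0) ∧
    ProbabilityTheory.variance
      (fun z : ℝ × ℝ =>
        ∫ z2, ∫ z3, ∫ z4, hKer ![z, z2, z3, z4]
          ∂(μ.prod ν) ∂(μ.prod ν) ∂(μ.prod ν)) (μ.prod ν) = 0 := by
  have h₁ := integral_integral_integral_hKer_eq_zero μ ν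
  refine ⟨fun x1 y1 => h₁ (x1, y1), ?_⟩
  simp only [h₁]
  exact ProbabilityTheory.variance_zero _
end

section
/- Let π be a permutation of {1,2,3,4} with {π(1),π(2)} = {1,4} or {π(1),π(2)} = {2,3}, and let X2, X3, X4 (or the appropriate subset) be i.i.d. real random variables. Then E[a(X1,X2,X3,X4) | X_{π(1)} = x1, X_{π(2)} = x2] = 0 for all x1, x2. In particular, E[a(x1, X2, X3, x2)] = 0 when X2, X3 are i.i.d. -/
open Classical MeasureTheory

lemma signA_antisym23 (z1 z2 z3 z4 : ℝ) : signA z1 z3 z2 z4 = -signA z1 z2 z3 z4 := by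
  simp only [signA]
  rw [max_comm z1 z2, min_comm z3 z4, max_comm z3 z4, min_comm z1 z2]
  ring

lemma signA_antisym14 (z1 z2 z3 z4 : ℝ) : signA z4 z2 z3 z1 = -signA z1 z2 z3 z4 := by
  simp only [signA]
  rw [max_comm z4 z3, min_comm z2 z1, max_comm z2 z1, min_comm z4 z3,
      max_comm z4 z2, min_comm z3 z1, max_comm z3 z1, min_comm z4 z2]
  ring

lemma signA_bound (z1 z2 z3 z4 : ℝ) : ‖signA z1 z2 z3 z4‖ ≤ 4 := by
  simp only [signA, Real.norm_eq_abs]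
  split_ifs <;> norm_num

lemma measurable_signA_comp {α} [MeasurableSpace α] {a b c d : α → ℝ}
    (ha : Measurable a) (hb : Measurable b) (hc : Measurable c) (hd : Measurable d) :
    Measurable fun x => signA (a x) (b x) (c x) (d x) := by
  unfold signA
  apply Measurable.sub
  apply Measurable.sub
  apply Measurable.add
  · exact Measurable.ite (measurableSet_lt (ha.max hc) (hb.min hd)) measurable_const measurable_const
  · exact Measurable.ite (measurableSet_lt (hb.max hd) (ha.min hc)) measurable_const measurable_const
  · exact Measurable.ite (measurableSet_lt (ha.max hb) (hc.min hd)) measurable_const measurable_const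
  · exact Measurable.ite (measurableSet_lt (hc.max hd) (ha.min hb)) measurable_const measurable_const

lemma double_integral_antisym_zero (μ : Measure ℝ) [IsProbabilityMeasure μ]
    (g : ℝ → ℝ → ℝ)
    (hm : Measurable fun p : ℝ × ℝ => g p.1 p.2)
    (hb : ∀ u v, ‖g u v‖ ≤ 4)
    (ha : ∀ u v, g v u = -g u v) :
    (∫ u, ∫ v, g u v ∂μ ∂μ) = 0 := by
  have hint : Integrable (fun p : ℝ × ℝ => g p.1 p.2) (μ.prod μ) := by
    refine (integrable_const (4:ℝ)).mono' hm.aestronglyMeasurable ?_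
    filter_upwards with p using hb p.1 p.2
  have h1 : (∫ u, ∫ v, g u v ∂μ ∂μ) = ∫ p, g p.1 p.2 ∂(μ.prod μ) :=
    (MeasureTheory.integral_prod _ hint).symm
  have h2 : (∫ p, g p.1 p.2 ∂(μ.prod μ)) = ∫ p : ℝ × ℝ, g p.2 p.1 ∂(μ.prod μ) := by
    rw [← MeasureTheory.integral_prod_swap]
    rfl
  have h3 : (∫ p : ℝ × ℝ, g p.2 p.1 ∂(μ.prod μ)) = -∫ p, g p.1 p.2 ∂(μ.prod μ) := by
    simp_rw [fun p : ℝ × ℝ => ha p.1 p.2]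
    exact integral_neg _
  rw [h1]
  linarith [h1, h2, h3]

/-- If `{π(1),π(2)} = {1,4}` or `{2,3}` (0-indexed: `{0,3}` or `{1,2}`), then fixing the
arguments of `a` in positions `π(1)` and `π(2)` and averaging over the remaining two
i.i.d. coordinates gives zero.  In particular `E[a(x1, X2, X3, x2)] = 0`. -/
theorem expectation_signA_perm_zero
    (μ : Measure ℝ) [IsProbabilityMeasure μ] (π : Equiv.Perm (Fin 4))
    (hπ : ({π 0, π 1} : Finset (Fin 4)) = {0, 3} ∨
          ({π 0, π 1} : Finset (Fin 4)) = {1, 2})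
    (x1 x2 : ℝ) :
    (∫ u, ∫ v,
        (fun w : Fin 4 → ℝ => signA (w 0) (w 1) (w 2) (w 3))
          (fun i => if i = π 0 then x1 else if i = π 1 then x2
            else if i = π 2 then u else v) ∂μ ∂μ) = 0 ∧
    (∫ u, ∫ v, signA x1 u v x2 ∂μ ∂μ) = 0 := by
  have hmfst : Measurable fun p : ℝ × ℝ => p.1 := measurable_fst
  have hmsnd : Measurable fun p : ℝ × ℝ => p.2 := measurable_snd
  have hmc : ∀ c : ℝ, Measurable fun _ : ℝ × ℝ => c := fun c => measurable_const
  have keyA : ∀ a b : ℝ, (∫ u, ∫ v, signA a u v b ∂μ ∂μ) = 0 := by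
    intro a b
    apply double_integral_antisym_zero μ (fun u v => signA a u v b)
      (measurable_signA_comp (hmc a) hmfst hmsnd (hmc b))
      (fun u v => signA_bound _ _ _ _)
    intro u v; exact signA_antisym23 a u v b
  have keyA' : ∀ a b : ℝ, (∫ u, ∫ v, signA a v u b ∂μ ∂μ) = 0 := by
    intro a b
    apply double_integral_antisym_zero μ (fun u v => signA a v u b)
      (measurable_signA_comp (hmc a) hmsnd hmfst (hmc b))
      (fun u v => signA_bound _ _ _ _)
    intro u v
    rw [signA_antisym23 a u v b, signA_antisym23 a v u b]; ring
  have keyB : ∀ a b : ℝ, (∫ u, ∫ v, signA u a b v ∂μ ∂μ) = 0 := by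
    intro a b
    apply double_integral_antisym_zero μ (fun u v => signA u a b v)
      (measurable_signA_comp hmfst (hmc a) (hmc b) hmsnd)
      (fun u v => signA_bound _ _ _ _)
    intro u v; exact signA_antisym14 u a b v
  have keyB' : ∀ a b : ℝ, (∫ u, ∫ v, signA v a b u ∂μ ∂μ) = 0 := by
    intro a b
    apply double_integral_antisym_zero μ (fun u v => signA v a b u)
      (measurable_signA_comp hmsnd (hmc a) (hmc b) hmfst)
      (fun u v => signA_bound _ _ _ _)
    intro u v
    rw [signA_antisym14 u a b v, signA_antisym14 v a b u]; ring
  refine ⟨?_, keyA x1 x2⟩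
  have hne01 : π 0 ≠ π 1 := fun h => by simpa using π.injective h
  have hne02 : π 0 ≠ π 2 := fun h => by simpa using π.injective h
  have hne12 : π 1 ≠ π 2 := fun h => by simpa using π.injective h
  have hne03 : π 0 ≠ π 3 := fun h => by simpa using π.injective h
  have hne13 : π 1 ≠ π 3 := fun h => by simpa using π.injective h
  have hne23 : π 2 ≠ π 3 := fun h => by simpa using π.injective h
  rcases hπ with h | h
  · have h0 : π 0 = 0 ∨ π 0 = 3 := by
      have : π 0 ∈ ({π 0, π 1} : Finset (Fin 4)) := by simp
      rw [h] at this; simpa using this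
    have h1 : π 1 = 0 ∨ π 1 = 3 := by
      have : π 1 ∈ ({π 0, π 1} : Finset (Fin 4)) := by simp
      rw [h] at this; simpa using this
    have h2 : π 2 = 1 ∨ π 2 = 2 := by
      have h2' : π 2 ∉ ({0, 3} : Finset (Fin 4)) := by
        rw [← h]; simp [hne02.symm, hne12.symm]
      revert h2'; generalize π 2 = a; revert a; decide
    have h3 : π 3 = 1 ∨ π 3 = 2 := by
      have h3' : π 3 ∉ ({0, 3} : Finset (Fin 4)) := by
        rw [← h]; simp [hne03.symm, hne13.symm]
      revert h3'; generalize π 3 = a; revert a; decide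
    rcases h0 with h0 | h0 <;> rcases h1 with h1 | h1 <;>
      first
      | (exact absurd (h0.trans h1.symm) hne01)
      | (rcases h2 with h2 | h2 <;> rcases h3 with h3 | h3 <;>
          first
          | (exact absurd (h2.trans h3.symm) hne23)
          | (simp only [h0, h1, h2, h3]
             norm_num [show ((0:Fin 4) ≠ 3) by decide, show ((1:Fin 4) ≠ 0) by decide,
               show ((1:Fin 4) ≠ 3) by decide, show ((1:Fin 4) ≠ 2) by decide,
               show ((2:Fin 4) ≠ 0) by decide, show ((2:Fin 4) ≠ 3) by decide,
               show ((2:Fin 4) ≠ 1) by decide, show ((3:Fin 4) ≠ 0) by decide,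
               show ((0:Fin 4) ≠ 1) by decide, show ((0:Fin 4) ≠ 2) by decide,
               show ((3:Fin 4) ≠ 1) by decide, show ((3:Fin 4) ≠ 2) by decide]
             first | exact keyA _ _ | exact keyA' _ _))
  · have h0 : π 0 = 1 ∨ π 0 = 2 := by
      have : π 0 ∈ ({π 0, π 1} : Finset (Fin 4)) := by simp
      rw [h] at this; simpa using this
    have h1 : π 1 = 1 ∨ π 1 = 2 := by
      have : π 1 ∈ ({π 0, π 1} : Finset (Fin 4)) := by simp
      rw [h] at this; simpa using this
    have h2 : π 2 = 0 ∨ π 2 = 3 := by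
      have h2' : π 2 ∉ ({1, 2} : Finset (Fin 4)) := by
        rw [← h]; simp [hne02.symm, hne12.symm]
      revert h2'; generalize π 2 = a; revert a; decide
    have h3 : π 3 = 0 ∨ π 3 = 3 := by
      have h3' : π 3 ∉ ({1, 2} : Finset (Fin 4)) := by
        rw [← h]; simp [hne03.symm, hne13.symm]
      revert h3'; generalize π 3 = a; revert a; decide
    rcases h0 with h0 | h0 <;> rcases h1 with h1 | h1 <;>
      first
      | (exact absurd (h0.trans h1.symm) hne01)
      | (rcases h2 with h2 | h2 <;> rcases h3 with h3 | h3 <;>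
          first
          | (exact absurd (h2.trans h3.symm) hne23)
          | (simp only [h0, h1, h2, h3]
             norm_num [show ((0:Fin 4) ≠ 3) by decide, show ((1:Fin 4) ≠ 0) by decide,
               show ((1:Fin 4) ≠ 3) by decide, show ((1:Fin 4) ≠ 2) by decide,
               show ((2:Fin 4) ≠ 0) by decide, show ((2:Fin 4) ≠ 3) by decide,
               show ((2:Fin 4) ≠ 1) by decide, show ((3:Fin 4) ≠ 0) by decide,
               show ((0:Fin 4) ≠ 1) by decide, show ((0:Fin 4) ≠ 2) by decide,
               show ((3:Fin 4) ≠ 1) by decide, show ((3:Fin 4) ≠ 2) by decide]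
             first | exact keyB _ _ | exact keyB' _ _))
end

section
/- For each positive integer j, the function φ_j(x) = √2 cos(πjx) is an eigenfunction of the Cramér–von Mises integral operator with eigenvalue 1/(j²π²); that is, ∫₀¹ c(x,y) √2 cos(πjy) dy = (1/(j²π²)) √2 cos(πjx) for all x ∈ [0,1], where c(x,y) = (1/2)x² + (1/2)y² - max(x,y) + 1/3. -/
open Real MeasureTheory

/-!
On each side of the diagonal `y = x` the kernel `y ↦ c(x, y)` is a quadratic with leading
coefficient `1/2`, so `∫₀¹ c(x, y) cos(a y) dy` is evaluated with the primitive
`p sin(a y)/a + p' cos(a y)/a² - p'' sin(a y)/a³` of `p(y) cos(a y)`. For `a = πj` the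
`sin` terms at `0` and `1` vanish, so do the `cos` terms there since `∂_y c(x, 0) = ∂_y c(x, 1) = 0`,
and the jump of `∂_y c` by `1` across `y = x` leaves exactly `cos(a x)/a²`.
-/

/-- Cramér–von Mises kernel. -/
noncomputable def cvmKer (u v : ℝ) : ℝ := (1 / 2) * u ^ 2 + (1 / 2) * v ^ 2 - max u v + 1 / 3

noncomputable def quadMulCosPrimitive (a q d c y : ℝ) : ℝ :=
  (q * y ^ 2 + d * y + c) * sin (a * y) / a + (2 * q * y + d) * cos (a * y) / a ^ 2
    - 2 * q * sin (a * y) / a ^ 3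

lemma hasDerivAt_quadMulCosPrimitive {a : ℝ} (ha : a ≠ 0) (q d c y : ℝ) :
    HasDerivAt (quadMulCosPrimitive a q d c) ((q * y ^ 2 + d * y + c) * cos (a * y)) y := by
  have hsin : HasDerivAt (fun t => sin (a * t)) (cos (a * y) * a) y :=
    ((hasDerivAt_id' y).const_mul a).sin.congr_deriv (by simp)
  have hcos : HasDerivAt (fun t => cos (a * t)) (-sin (a * y) * a) y :=
    ((hasDerivAt_id' y).const_mul a).cos.congr_deriv (by simp)
  have hp : HasDerivAt (fun t => q * t ^ 2 + d * t + c) (2 * q * y + d) y :=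
    (((hasDerivAt_pow 2 y).const_mul q).fun_add ((hasDerivAt_id' y).const_mul d)).add_const c
      |>.congr_deriv (by norm_num; ring)
  have hp' : HasDerivAt (fun t => 2 * q * t + d) (2 * q) y :=
    ((hasDerivAt_id' y).const_mul (2 * q)).add_const d |>.congr_deriv (mul_one _)
  refine ((((hp.fun_mul hsin).div_const a).fun_add ((hp'.fun_mul hcos).div_const (a ^ 2))).fun_sub
    ((hsin.const_mul (2 * q)).div_const (a ^ 3))).congr_deriv ?_
  field_simp
  ring

theorem integral_quadratic_mul_cos {a : ℝ} (ha : a ≠ 0) (q d c u v : ℝ) :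
    ∫ y in u..v, (q * y ^ 2 + d * y + c) * cos (a * y) =
      quadMulCosPrimitive a q d c v - quadMulCosPrimitive a q d c u :=
  intervalIntegral.integral_eq_sub_of_hasDerivAt
    (fun y _ => hasDerivAt_quadMulCosPrimitive ha q d c y)
    ((by fun_prop : Continuous fun y => (q * y ^ 2 + d * y + c) * cos (a * y)).intervalIntegrable
      u v)

lemma cvmKer_of_ge {x y : ℝ} (h : y ≤ x) :
    cvmKer x y = 1 / 2 * y ^ 2 + (1 / 2 * x ^ 2 - x + 1 / 3) := by
  rw [cvmKer, max_eq_left h]; ring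

lemma cvmKer_of_le {x y : ℝ} (h : x ≤ y) :
    cvmKer x y = 1 / 2 * y ^ 2 - y + (1 / 2 * x ^ 2 + 1 / 3) := by
  rw [cvmKer, max_eq_right h]; ring

theorem integral_cvmKer_mul_cos {a : ℝ} (ha : a ≠ 0) (hsa : sin a = 0) {x : ℝ}
    (hx : x ∈ Set.Icc (0 : ℝ) 1) :
    ∫ y in (0 : ℝ)..1, cvmKer x y * cos (a * y) = cos (a * x) / a ^ 2 := by
  have hint : ∀ u v, IntervalIntegrable (fun y => cvmKer x y * cos (a * y)) volume u v :=
    fun u v => (by unfold cvmKer; fun_prop : Continuous _).intervalIntegrable u v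
  have hleft : ∫ y in (0 : ℝ)..x, cvmKer x y * cos (a * y) =
      ∫ y in (0 : ℝ)..x, (1 / 2 * y ^ 2 + 0 * y + (1 / 2 * x ^ 2 - x + 1 / 3)) * cos (a * y) :=
    intervalIntegral.integral_congr fun y hy => by
      rw [Set.uIcc_of_le hx.1] at hy; rw [cvmKer_of_ge hy.2]; ring
  have hright : ∫ y in x..(1 : ℝ), cvmKer x y * cos (a * y) =
      ∫ y in x..(1 : ℝ), (1 / 2 * y ^ 2 + (-1) * y + (1 / 2 * x ^ 2 + 1 / 3)) * cos (a * y) :=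
    intervalIntegral.integral_congr fun y hy => by
      rw [Set.uIcc_of_le hx.2] at hy; rw [cvmKer_of_le hy.1]; ring
  rw [← intervalIntegral.integral_add_adjacent_intervals (hint 0 x) (hint x 1), hleft, hright,
    integral_quadratic_mul_cos ha, integral_quadratic_mul_cos ha]
  simp only [quadMulCosPrimitive, mul_zero, mul_one, sin_zero, cos_zero, hsa]
  field_simp
  ring

theorem cvm_eigenfunction (j : ℕ) (hj : 1 ≤ j) (x : ℝ) (hx : x ∈ Set.Icc (0:ℝ) 1) :
    (∫ y in Set.Icc (0:ℝ) 1, cvmKer x y * (Real.sqrt 2 * Real.cos (π * j * y))) =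
      (1 / (j ^ 2 * π ^ 2)) * (Real.sqrt 2 * Real.cos (π * j * x)) := by
  have ha : π * j ≠ 0 := mul_ne_zero pi_ne_zero (Nat.cast_ne_zero.mpr (Nat.one_le_iff_ne_zero.mp hj))
  have hsa : sin (π * j) = 0 := by rw [mul_comm]; exact sin_nat_mul_pi j
  simp_rw [mul_left_comm (cvmKer x _), integral_const_mul, integral_Icc_eq_integral_Ioc,
    ← intervalIntegral.integral_of_le zero_le_one, integral_cvmKer_mul_cos ha hsa hx]
  ring
end
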